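/- Let (X, ρ) be a metric space with Borel σ-algebra and λ a σ-finite Borel measure on X, let d ≥ 2, let H be a connected simple graph on {1,…,d}, and let r > 0. For every n with 1 ≤ n ≤ d, the function (g)_n(x_1,…,x_n) = ∫_{X^{d−n}} g^{sym}_{H,r}(x_1,…,x_d) dλ^{⊗(d−n)}(x_{n+1},…,x_d) satisfies ∫_{X^n} (g)_n(x_1,…,x_n)^2 dλ^{⊗n}(x_1,…,x_n) ≤ A_{dr, 2d−n−1}, and moreover A_{dr, 2d−n−1} ≤ B_{dr}^{2d−n−1} · λ(X), where both inequalities are understood in [0, ∞]. -/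

import Mathlib

/-!
Since `H` is connected, any placement of its vertices in which adjacent vertices are within `r`
of each other has all vertices within `d * r` of each other, and this property is invariant under
relabelling. So `(g)_n (x)` vanishes unless all `x_i` lie in `B(x_1, d r)`, and it is at most
`λ(B(x_1, d r))^(d - n)` in any case. Squaring and integrating `x_2, …, x_n` over that ball gives
`A_{dr, 2d-n-1}`; the second bound replaces `λ(B(x, d r))` by its essential supremum.
-/

open Real Finset MeasureTheory ENNReal

/-- `g_{H,r}(x_1,…,x_d) = ∏_{{k,l} ∈ E(H)} 1{ρ(x_k,x_l) ≤ r}`. -/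
noncomputable def gGraph {X : Type*} [MetricSpace X] {d : ℕ}
    (H : SimpleGraph (Fin d)) [DecidableRel H.Adj] (r : ℝ) (x : Fin d → X) : ℝ :=
  ∏ k : Fin d, ∏ l : Fin d,
    if H.Adj k l then (if dist (x k) (x l) ≤ r then (1 : ℝ) else 0) else 1

/-- The symmetrization `g^{sym}_{H,r}`. -/
noncomputable def gGraphSym {X : Type*} [MetricSpace X] {d : ℕ}
    (H : SimpleGraph (Fin d)) [DecidableRel H.Adj] (r : ℝ) (x : Fin d → X) : ℝ :=
  ((d.factorial : ℝ))⁻¹ * ∑ σ : Equiv.Perm (Fin d), gGraph H r (x ∘ σ)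

/-- Concatenation of an `n`-tuple and a `(d-n)`-tuple into a `d`-tuple. -/
def combineTuple {X : Type*} {d n : ℕ} (x : Fin n → X) (y : Fin (d - n) → X) : Fin d → X :=
  fun i => if h : (i : ℕ) < n then x ⟨i, h⟩ else y ⟨(i : ℕ) - n, by have := i.isLt; omega⟩

/-- `(g)_n(x_1,…,x_n) = ∫_{X^{d-n}} g^{sym}_{H,r}(x_1,…,x_d) dλ^{⊗(d-n)}(x_{n+1},…,x_d)`,
as an `[0,∞]`-valued integral. -/
noncomputable def gGraphKernel {X : Type*} [MetricSpace X] [MeasurableSpace X] {d : ℕ}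
    (μ : Measure X) (H : SimpleGraph (Fin d)) [DecidableRel H.Adj] (r : ℝ) (n : ℕ)
    (x : Fin n → X) : ℝ≥0∞ :=
  ∫⁻ y : Fin (d - n) → X, ENNReal.ofReal (gGraphSym H r (combineTuple x y))
    ∂(Measure.pi fun _ : Fin (d - n) => μ)

section GraphIndicator

variable {X : Type*} [MetricSpace X] {d : ℕ} {H : SimpleGraph (Fin d)} {r : ℝ}

lemma dist_le_length_mul_of_walk {z : Fin d → X} (hz : ∀ k l, H.Adj k l → dist (z k) (z l) ≤ r)
    {a b : Fin d} (w : H.Walk a b) : dist (z a) (z b) ≤ w.length * r := by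
  induction w with
  | nil => simp
  | @cons u v t huv p ih =>
    calc dist (z u) (z t) ≤ dist (z u) (z v) + dist (z v) (z t) := dist_triangle _ _ _
      _ ≤ r + p.length * r := add_le_add (hz _ _ huv) ih
      _ = (SimpleGraph.Walk.cons huv p).length * r := by
        rw [SimpleGraph.Walk.length_cons]; push_cast; ring

lemma dist_le_card_mul_of_connected (hH : H.Connected) (hr : 0 ≤ r) {z : Fin d → X}
    (hz : ∀ k l, H.Adj k l → dist (z k) (z l) ≤ r) (i j : Fin d) :
    dist (z i) (z j) ≤ d * r := by
  obtain ⟨w⟩ := hH.preconnected i j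
  have hlen : w.bypass.length < d := by simpa using w.bypass_isPath.length_lt
  calc dist (z i) (z j) ≤ w.bypass.length * r := dist_le_length_mul_of_walk hz w.bypass
    _ ≤ d * r := by gcongr

variable [DecidableRel H.Adj]

lemma gGraph_eq_ite (z : Fin d → X) :
    gGraph H r z = if ∀ k l, H.Adj k l → dist (z k) (z l) ≤ r then 1 else 0 := by
  split_ifs with h
  · refine prod_eq_one fun k _ => prod_eq_one fun l _ => ?_
    split_ifs with hkl hdist
    · rfl
    · exact absurd (h k l hkl) hdist
    · rfl
  · push Not at h
    obtain ⟨k, l, hkl, hdist⟩ := h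
    refine prod_eq_zero (mem_univ k) (prod_eq_zero (mem_univ l) ?_)
    rw [if_pos hkl, if_neg hdist.not_ge]

lemma gGraphSym_le_one (z : Fin d → X) : gGraphSym H r z ≤ 1 := by
  have hsum : ∑ σ : Equiv.Perm (Fin d), gGraph H r (z ∘ σ) ≤ d.factorial := by
    calc ∑ σ : Equiv.Perm (Fin d), gGraph H r (z ∘ σ) ≤ ∑ _σ : Equiv.Perm (Fin d), (1 : ℝ) :=
          sum_le_sum fun σ _ => by rw [gGraph_eq_ite]; split_ifs <;> norm_num
      _ = d.factorial := by simp [Fintype.card_perm]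
  rwa [gGraphSym, inv_mul_le_iff₀ (by positivity), mul_one]

lemma gGraphSym_eq_zero (hH : H.Connected) (hr : 0 ≤ r) {z : Fin d → X} {i j : Fin d}
    (hij : d * r < dist (z i) (z j)) : gGraphSym H r z = 0 := by
  have hzero (σ : Equiv.Perm (Fin d)) : gGraph H r (z ∘ σ) = 0 := by
    rw [gGraph_eq_ite, if_neg]
    intro hσ
    have := dist_le_card_mul_of_connected hH hr hσ (σ.symm i) (σ.symm j)
    simp only [Function.comp_apply, Equiv.apply_symm_apply] at this
    exact this.not_gt hij
  simp [gGraphSym, hzero]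

lemma ofReal_gGraphSym_le_ite (hH : H.Connected) (hr : 0 ≤ r) (z : Fin d → X) (i₀ : Fin d) :
    ENNReal.ofReal (gGraphSym H r z) ≤ if ∀ i, dist (z i) (z i₀) ≤ d * r then 1 else 0 := by
  split_ifs with h
  · exact ENNReal.ofReal_le_one.mpr (gGraphSym_le_one z)
  · push Not at h
    obtain ⟨i, hi⟩ := h
    simp [gGraphSym_eq_zero hH hr hi]

end GraphIndicator

section Kernel

variable {X : Type*} {d n : ℕ}

lemma combineTuple_castLE (hnd : n ≤ d) (x : Fin n → X) (y : Fin (d - n) → X) (i : Fin n) :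
    combineTuple x y (Fin.castLE hnd i) = x i := by
  simp [combineTuple]

lemma combineTuple_add (x : Fin n → X) (y : Fin (d - n) → X) (j : Fin (d - n))
    (h : n + j < d) : combineTuple x y ⟨n + j, h⟩ = y j := by
  simp [combineTuple]

variable [MetricSpace X] [MeasurableSpace X] [OpensMeasurableSpace X] {μ : Measure X}
  [SigmaFinite μ] {H : SimpleGraph (Fin d)} [DecidableRel H.Adj] {r : ℝ}

lemma gGraphKernel_le (hH : H.Connected) (hr : 0 ≤ r) (hnd : n ≤ d) (x : Fin n → X)
    (i₀ : Fin n) :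
    gGraphKernel μ H r n x ≤ (if ∀ i, dist (x i) (x i₀) ≤ d * r then 1 else 0) *
      μ (Metric.closedBall (x i₀) (d * r)) ^ (d - n) := by
  set B := Metric.closedBall (x i₀) (d * r)
  have hpt (y : Fin (d - n) → X) : ENNReal.ofReal (gGraphSym H r (combineTuple x y)) ≤
      (if ∀ i, dist (x i) (x i₀) ≤ d * r then 1 else 0) *
        (Set.univ.pi fun _ => B).indicator 1 y := by
    refine (ofReal_gGraphSym_le_ite hH hr _ (Fin.castLE hnd i₀)).trans ?_
    rw [combineTuple_castLE]
    split_ifs with hall hx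
    · have hy : y ∈ Set.univ.pi fun _ => B := fun j _ => by
        have := hall ⟨n + j, by omega⟩
        rwa [combineTuple_add] at this
      simp [Set.indicator_of_mem hy]
    · exact absurd (fun i => by simpa [combineTuple_castLE] using hall (Fin.castLE hnd i)) hx
    all_goals simp
  calc gGraphKernel μ H r n x
      ≤ ∫⁻ y, (if ∀ i, dist (x i) (x i₀) ≤ d * r then 1 else 0) *
          (Set.univ.pi fun _ => B).indicator 1 y ∂Measure.pi fun _ => μ := lintegral_mono hpt
    _ = (if ∀ i, dist (x i) (x i₀) ≤ d * r then 1 else 0) * μ B ^ (d - n) := by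
      rw [lintegral_const_mul' _ _ (by split_ifs <;> simp),
        lintegral_indicator_one (.univ_pi fun _ => Metric.isClosed_closedBall.measurableSet),
        Measure.pi_pi]
      simp [B]

end Kernel

lemma lintegral_pi_ite_dist_le_mul_le {X : Type*} [MetricSpace X] [MeasurableSpace X]
    [OpensMeasurableSpace X] (μ : Measure X) [SigmaFinite μ] (m : ℕ) (s : ℝ) (f : X → ℝ≥0∞) :
    ∫⁻ x : Fin (m + 1) → X, (if ∀ i, dist (x i) (x 0) ≤ s then 1 else 0) * f (x 0)
        ∂(Measure.pi fun _ => μ) ≤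
      ∫⁻ x, μ (Metric.closedBall x s) ^ m * f x ∂μ := by
  let e := MeasurableEquiv.piFinSuccAbove (fun _ : Fin (m + 1) => X) 0
  let G : X × (Fin m → X) → ℝ≥0∞ := fun p =>
    (Set.univ.pi fun _ => Metric.closedBall p.1 s).indicator 1 p.2 * f p.1
  have hG (x : Fin (m + 1) → X) :
      (if ∀ i, dist (x i) (x 0) ≤ s then 1 else 0) * f (x 0) ≤ G (e x) := by
    split_ifs with hx
    · have hmem : (e x).2 ∈ Set.univ.pi fun _ => Metric.closedBall (e x).1 s :=
        fun j _ => hx _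
      simp only [G, Set.indicator_of_mem hmem, Pi.one_apply, one_mul]
      rfl
    · simp
  calc _ ≤ ∫⁻ x, G (e x) ∂Measure.pi fun _ => μ := lintegral_mono hG
    _ = ∫⁻ p, G p ∂μ.prod (Measure.pi fun _ => μ) :=
      (measurePreserving_piFinSuccAbove (fun _ => μ) 0).lintegral_comp_emb e.measurableEmbedding G
    _ ≤ ∫⁻ x, ∫⁻ y, G (x, y) ∂(Measure.pi fun _ => μ) ∂μ := lintegral_prod_le G
    _ = ∫⁻ x, μ (Metric.closedBall x s) ^ m * f x ∂μ := by
      refine lintegral_congr fun x => ?_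
      have hball : MeasurableSet (Set.univ.pi fun _ : Fin m => Metric.closedBall x s) :=
        .univ_pi fun _ => Metric.isClosed_closedBall.measurableSet
      simp only [G]
      rw [lintegral_mul_const _ (measurable_one.indicator hball), lintegral_indicator_one hball,
        Measure.pi_pi]
      simp

lemma lintegral_pow_le_essSup_pow_mul {α : Type*} [MeasurableSpace α] (μ : Measure α)
    (f : α → ℝ≥0∞) (k : ℕ) : ∫⁻ x, f x ^ k ∂μ ≤ essSup f μ ^ k * μ Set.univ := by
  calc ∫⁻ x, f x ^ k ∂μ ≤ ∫⁻ _, essSup f μ ^ k ∂μ :=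
        lintegral_mono_ae <| (ENNReal.ae_le_essSup f).mono fun _ hx => pow_le_pow_left' hx k
    _ = essSup f μ ^ k * μ Set.univ := lintegral_const _

theorem stmt_3 {X : Type*} [MetricSpace X] [MeasurableSpace X] [BorelSpace X]
    (μ : Measure X) [SigmaFinite μ] (d : ℕ)
    (H : SimpleGraph (Fin d)) [DecidableRel H.Adj] (hH : H.Connected)
    (r : ℝ) (hr : 0 < r) (n : ℕ) (hn1 : 1 ≤ n) (hnd : n ≤ d) :
    (∫⁻ x : Fin n → X, (gGraphKernel μ H r n x) ^ 2 ∂(Measure.pi fun _ : Fin n => μ)) ≤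
      (∫⁻ x : X, (μ (Metric.closedBall x (d * r))) ^ (2 * d - n - 1) ∂μ) ∧
    (∫⁻ x : X, (μ (Metric.closedBall x (d * r))) ^ (2 * d - n - 1) ∂μ) ≤
      (essSup (fun x : X => μ (Metric.closedBall x (d * r))) μ) ^ (2 * d - n - 1) *
        μ Set.univ := by
  refine ⟨?_, lintegral_pow_le_essSup_pow_mul μ _ _⟩
  obtain ⟨m, rfl⟩ : ∃ m, n = m + 1 := ⟨n - 1, by omega⟩
  have hsq (x : Fin (m + 1) → X) : gGraphKernel μ H r (m + 1) x ^ 2 ≤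
      (if ∀ i, dist (x i) (x 0) ≤ d * r then 1 else 0) *
        μ (Metric.closedBall (x 0) (d * r)) ^ (2 * (d - (m + 1))) := by
    calc _ ≤ ((if ∀ i, dist (x i) (x 0) ≤ d * r then 1 else 0) *
          μ (Metric.closedBall (x 0) (d * r)) ^ (d - (m + 1))) ^ 2 :=
        pow_le_pow_left' (gGraphKernel_le hH hr.le hnd x 0) 2
      _ = _ := by rw [mul_pow, ite_pow, one_pow, zero_pow two_ne_zero, ← pow_mul, mul_comm 2]
  calc _ ≤ _ := lintegral_mono hsq
    _ ≤ _ := lintegral_pi_ite_dist_le_mul_le μ m _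
      fun y => μ (Metric.closedBall y (d * r)) ^ (2 * (d - (m + 1)))
    _ = _ := lintegral_congr fun x => by rw [← pow_add]; congr 1; omega
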